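/- Let H ≤ G × G be a subspace with Goursat data E_X = {x | ∃ z, (x,z) ∈ H}, E_Z = {z | ∃ x, (x,z) ∈ H}, N_X = {x | (x,0) ∈ H}, N_Z = {z | (0,z) ∈ H}. Then the following are equivalent: (1) H + H^ω is a direct product of two subspaces of G; (2) H ∩ H^ω is a direct product of two subspaces of G; (3) H + H^ω = (E_X + N_Z^θ) × (E_Z + N_X^θ); (4) H ∩ H^ω = (N_X ∩ E_Z^θ) × (N_Z ∩ E_X^θ). -/

import Mathlib

open Finset

/-- Orthogonal complement of a submodule with respect to a bilinear form:
`ortho ξ H = {v | ξ(v,h) = 0 for all h ∈ H}`. -/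
def ortho {K V : Type*} [CommSemiring K] [AddCommMonoid V] [Module K V]
    (ξ : V →ₗ[K] V →ₗ[K] K) (H : Submodule K V) : Submodule K V :=
  ⨅ h ∈ H, LinearMap.ker (ξ.flip h)

/-- The dot product `θ(a,b) = ∑ j, a j * b j` as a bilinear form on `Fin n → ZMod p`. -/
def dotB (p n : ℕ) : (Fin n → ZMod p) →ₗ[ZMod p] (Fin n → ZMod p) →ₗ[ZMod p] ZMod p :=
  LinearMap.mk₂ (ZMod p) (fun a b => ∑ j, a j * b j)
    (fun a a' b => by simp [add_mul, Finset.sum_add_distrib])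
    (fun c a b => by simp [Finset.mul_sum, mul_assoc])
    (fun a b b' => by simp [mul_add, Finset.sum_add_distrib])
    (fun c a b => by simp [Finset.mul_sum, mul_left_comm])

/-- The symmetric form on `V × V` induced by a bilinear form `B` on `V`:
`(v,w) ↦ B v.1 w.1 + B v.2 w.2`. -/
def sumB {K V : Type*} [CommRing K] [AddCommGroup V] [Module K V]
    (B : V →ₗ[K] V →ₗ[K] K) : (V × V) →ₗ[K] (V × V) →ₗ[K] K :=
  LinearMap.mk₂ K (fun v w => B v.1 w.1 + B v.2 w.2)
    (fun v v' w => by simp; ring)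
    (fun c v w => by simp; ring)
    (fun v w w' => by simp; ring)
    (fun c v w => by simp; ring)

/-- The symplectic form on `V × V` induced by a symmetric bilinear form `B` on `V`:
`(v,w) ↦ B v.2 w.1 - B v.1 w.2`. -/
def sympB {K V : Type*} [CommRing K] [AddCommGroup V] [Module K V]
    (B : V →ₗ[K] V →ₗ[K] K) : (V × V) →ₗ[K] (V × V) →ₗ[K] K :=
  LinearMap.mk₂ K (fun v w => B v.2 w.1 - B v.1 w.2)
    (fun v v' w => by simp; ring)
    (fun c v w => by simp; ring)
    (fun v w w' => by simp; ring)
    (fun c v w => by simp; ring)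

/-!
Since `ω` is nondegenerate, `H^ω^ω = H`, hence `H ∩ H^ω = (H + H^ω)^ω` and
`H + H^ω = (H ∩ H^ω)^ω`; as `(A × C)^ω = C^θ × A^θ`, this gives (1) ⇔ (2).
A subspace `L ≤ G × G` is a direct product iff it is the product of its two projections,
and iff it is the product of its two slices `{x | (x,0) ∈ L}`, `{z | (0,z) ∈ L}`.
The projections of `H^ω` are `N_Z^θ`, `N_X^θ` and its slices are `E_Z^θ`, `E_X^θ`, so the first
criterion applied to `H + H^ω` reads (3) and the second applied to `H ∩ H^ω` reads (4).
-/

open LinearMap (BilinForm)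

section Prod

variable {R M M₂ : Type*} [Semiring R] [AddCommMonoid M] [Module R M] [AddCommMonoid M₂]
  [Module R M₂]

lemma Submodule.exists_eq_prod_iff_eq_prod_map (L : Submodule R (M × M₂)) :
    (∃ (A : Submodule R M) (B : Submodule R M₂), L = A.prod B) ↔
      L = (L.map (LinearMap.fst R M M₂)).prod (L.map (LinearMap.snd R M M₂)) :=
  ⟨by rintro ⟨A, B, rfl⟩; rw [prod_map_fst, prod_map_snd], fun h => ⟨_, _, h⟩⟩

lemma Submodule.exists_eq_prod_iff_eq_prod_comap (L : Submodule R (M × M₂)) :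
    (∃ (A : Submodule R M) (B : Submodule R M₂), L = A.prod B) ↔
      L = (L.comap (LinearMap.inl R M M₂)).prod (L.comap (LinearMap.inr R M M₂)) :=
  ⟨by rintro ⟨A, B, rfl⟩; rw [prod_comap_inl, prod_comap_inr], fun h => ⟨_, _, h⟩⟩

end Prod

section Ortho

variable {K V : Type*}

lemma mem_ortho [CommSemiring K] [AddCommMonoid V] [Module K V] {ξ : V →ₗ[K] V →ₗ[K] K}
    {H : Submodule K V} {v : V} : v ∈ ortho ξ H ↔ ∀ h ∈ H, ξ v h = 0 := by
  simp [ortho]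

lemma ortho_eq_dualCoannihilator [CommSemiring K] [AddCommMonoid V] [Module K V]
    (ξ : V →ₗ[K] V →ₗ[K] K) (H : Submodule K V) :
    ortho ξ H = (H.map ξ.flip).dualCoannihilator := by
  ext v
  simp [mem_ortho, Submodule.mem_dualCoannihilator]

lemma ortho_sup [CommSemiring K] [AddCommMonoid V] [Module K V] (ξ : V →ₗ[K] V →ₗ[K] K)
    (A B : Submodule K V) : ortho ξ (A ⊔ B) = ortho ξ A ⊓ ortho ξ B := by
  simp only [ortho_eq_dualCoannihilator, Submodule.map_sup, Submodule.dualCoannihilator_sup_eq]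

lemma ortho_eq_orthogonal [CommSemiring K] [AddCommMonoid V] [Module K V]
    {ξ : V →ₗ[K] V →ₗ[K] K} (hξ : ξ.IsRefl) (H : Submodule K V) :
    ortho ξ H = BilinForm.orthogonal ξ H := by
  ext v
  rw [mem_ortho, BilinForm.mem_orthogonal_iff]
  exact ⟨fun h w hw => hξ _ _ (h w hw), fun h w hw => hξ _ _ (h w hw)⟩

variable [Field K] [AddCommGroup V] [Module K V] [FiniteDimensional K V]
  {ξ : V →ₗ[K] V →ₗ[K] K}

lemma ortho_ortho (hr : ξ.IsRefl) (hn : ξ.Nondegenerate) (H : Submodule K V) :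
    ortho ξ (ortho ξ H) = H := by
  rw [ortho_eq_orthogonal hr, ortho_eq_orthogonal hr, BilinForm.orthogonal_orthogonal hn hr]

lemma ortho_sup_ortho_self (hr : ξ.IsRefl) (hn : ξ.Nondegenerate) (H : Submodule K V) :
    ortho ξ (H ⊔ ortho ξ H) = H ⊓ ortho ξ H := by
  rw [ortho_sup, ortho_ortho hr hn, inf_comm]

lemma ortho_inf_ortho_self (hr : ξ.IsRefl) (hn : ξ.Nondegenerate) (H : Submodule K V) :
    ortho ξ (H ⊓ ortho ξ H) = H ⊔ ortho ξ H := by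
  rw [← ortho_sup_ortho_self hr hn, ortho_ortho hr hn]

end Ortho

section SympB

variable {K V : Type*} [CommRing K] [AddCommGroup V] [Module K V] {B : V →ₗ[K] V →ₗ[K] K}

lemma sympB_apply (v w : V × V) : sympB B v w = B v.2 w.1 - B v.1 w.2 := rfl

lemma sympB_isAlt (hB : BilinForm.IsSymm B) : (sympB B).IsAlt := fun v => by
  rw [sympB_apply, hB.eq, sub_self]

lemma sympB_separatingLeft (hB : B.SeparatingLeft) : (sympB B).SeparatingLeft := by
  intro v hv
  have h₁ : v.1 = 0 := hB _ fun d => by simpa [sympB_apply] using hv (0, d)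
  have h₂ : v.2 = 0 := hB _ fun c => by simpa [sympB_apply] using hv (c, 0)
  exact Prod.ext h₁ h₂

lemma sympB_nondegenerate (hs : BilinForm.IsSymm B) (hn : B.Nondegenerate) :
    (sympB B).Nondegenerate :=
  (sympB_isAlt hs).isRefl.nondegenerate_iff_separatingLeft.mpr (sympB_separatingLeft hn.1)

lemma ortho_sympB_prod (A C : Submodule K V) :
    ortho (sympB B) (A.prod C) = (ortho B C).prod (ortho B A) := by
  ext v
  simp only [mem_ortho, Submodule.mem_prod]
  refine ⟨fun h => ⟨fun c hc => ?_, fun a ha => ?_⟩, ?_⟩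
  · simpa [sympB_apply] using h (0, c) ⟨A.zero_mem, hc⟩
  · simpa [sympB_apply] using h (a, 0) ⟨ha, C.zero_mem⟩
  · rintro ⟨hC, hA⟩ ⟨a, c⟩ ⟨ha, hc⟩
    rw [sympB_apply, hA a ha, hC c hc, sub_zero]

lemma comap_inl_ortho_sympB (H : Submodule K (V × V)) :
    (ortho (sympB B) H).comap (LinearMap.inl K V V) = ortho B (H.map (LinearMap.snd K V V)) := by
  ext v
  simpa [mem_ortho, sympB_apply] using forall_comm

lemma comap_inr_ortho_sympB (H : Submodule K (V × V)) :
    (ortho (sympB B) H).comap (LinearMap.inr K V V) = ortho B (H.map (LinearMap.fst K V V)) := by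
  ext v
  simp [mem_ortho, sympB_apply]

lemma exists_eq_prod_inf_ortho_sympB_iff (H : Submodule K (V × V)) :
    (∃ A C : Submodule K V, H ⊓ ortho (sympB B) H = A.prod C) ↔
      H ⊓ ortho (sympB B) H
        = (H.comap (LinearMap.inl K V V) ⊓ ortho B (H.map (LinearMap.snd K V V))).prod
          (H.comap (LinearMap.inr K V V) ⊓ ortho B (H.map (LinearMap.fst K V V))) := by
  rw [Submodule.exists_eq_prod_iff_eq_prod_comap, Submodule.comap_inf, Submodule.comap_inf,
    comap_inl_ortho_sympB, comap_inr_ortho_sympB]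

end SympB

section Symplectic

variable {K V : Type*} [Field K] [AddCommGroup V] [Module K V] [FiniteDimensional K V]
  {B : V →ₗ[K] V →ₗ[K] K}

lemma map_fst_ortho_sympB (hs : BilinForm.IsSymm B) (hn : B.Nondegenerate)
    (H : Submodule K (V × V)) :
    (ortho (sympB B) H).map (LinearMap.fst K V V) = ortho B (H.comap (LinearMap.inr K V V)) := by
  conv_rhs => rw [← ortho_ortho (sympB_isAlt hs).isRefl (sympB_nondegenerate hs hn) H]
  rw [comap_inr_ortho_sympB, ortho_ortho hs.isRefl hn]

lemma map_snd_ortho_sympB (hs : BilinForm.IsSymm B) (hn : B.Nondegenerate)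
    (H : Submodule K (V × V)) :
    (ortho (sympB B) H).map (LinearMap.snd K V V) = ortho B (H.comap (LinearMap.inl K V V)) := by
  conv_rhs => rw [← ortho_ortho (sympB_isAlt hs).isRefl (sympB_nondegenerate hs hn) H]
  rw [comap_inl_ortho_sympB, ortho_ortho hs.isRefl hn]

lemma exists_eq_prod_sup_ortho_sympB_iff_inf (hs : BilinForm.IsSymm B) (hn : B.Nondegenerate)
    (H : Submodule K (V × V)) :
    (∃ A C : Submodule K V, H ⊔ ortho (sympB B) H = A.prod C) ↔
      ∃ A C : Submodule K V, H ⊓ ortho (sympB B) H = A.prod C := by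
  have hr := (sympB_isAlt hs).isRefl
  have hn' := sympB_nondegenerate hs hn
  constructor
  · rintro ⟨A, C, h⟩
    exact ⟨ortho B C, ortho B A, by rw [← ortho_sup_ortho_self hr hn', h, ortho_sympB_prod]⟩
  · rintro ⟨A, C, h⟩
    exact ⟨ortho B C, ortho B A, by rw [← ortho_inf_ortho_self hr hn', h, ortho_sympB_prod]⟩

lemma exists_eq_prod_sup_ortho_sympB_iff (hs : BilinForm.IsSymm B) (hn : B.Nondegenerate)
    (H : Submodule K (V × V)) :
    (∃ A C : Submodule K V, H ⊔ ortho (sympB B) H = A.prod C) ↔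
      H ⊔ ortho (sympB B) H
        = (H.map (LinearMap.fst K V V) ⊔ ortho B (H.comap (LinearMap.inr K V V))).prod
          (H.map (LinearMap.snd K V V) ⊔ ortho B (H.comap (LinearMap.inl K V V))) := by
  rw [Submodule.exists_eq_prod_iff_eq_prod_map, Submodule.map_sup, Submodule.map_sup,
    map_fst_ortho_sympB hs hn, map_snd_ortho_sympB hs hn]

end Symplectic

lemma dotB_isSymm (p n : ℕ) : BilinForm.IsSymm (dotB p n) :=
  ⟨fun a b => by simp only [dotB, LinearMap.mk₂_apply, mul_comm]⟩

lemma dotB_nondegenerate (p n : ℕ) : (dotB p n).Nondegenerate := by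
  refine (dotB_isSymm p n).isRefl.nondegenerate_iff_separatingLeft.mpr fun a ha => ?_
  funext j
  simpa [dotB, Pi.single_apply] using ha (Pi.single j 1)

/-- for `H ≤ G × G` with Goursat data `E_X, E_Z, N_X, N_Z`, the following
are equivalent: (1) `H ⊔ H^ω` is a direct product; (2) `H ⊓ H^ω` is a direct product;
(3) `H ⊔ H^ω = (E_X + N_Z^θ) × (E_Z + N_X^θ)`; (4) `H ⊓ H^ω = (N_X ∩ E_Z^θ) × (N_Z ∩ E_X^θ)`. -/
theorem stmt16 (p n : ℕ) [Fact p.Prime]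
    (H : Submodule (ZMod p) ((Fin n → ZMod p) × (Fin n → ZMod p))) :
    ((∃ A B : Submodule (ZMod p) (Fin n → ZMod p),
        H ⊔ ortho (sympB (dotB p n)) H = A.prod B) ↔
     (∃ A B : Submodule (ZMod p) (Fin n → ZMod p),
        H ⊓ ortho (sympB (dotB p n)) H = A.prod B)) ∧
    ((∃ A B : Submodule (ZMod p) (Fin n → ZMod p),
        H ⊔ ortho (sympB (dotB p n)) H = A.prod B) ↔
      H ⊔ ortho (sympB (dotB p n)) H
        = (H.map (LinearMap.fst (ZMod p) _ _)
            ⊔ ortho (dotB p n) (H.comap (LinearMap.inr (ZMod p) _ _))).prod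
          (H.map (LinearMap.snd (ZMod p) _ _)
            ⊔ ortho (dotB p n) (H.comap (LinearMap.inl (ZMod p) _ _)))) ∧
    ((∃ A B : Submodule (ZMod p) (Fin n → ZMod p),
        H ⊔ ortho (sympB (dotB p n)) H = A.prod B) ↔
      H ⊓ ortho (sympB (dotB p n)) H
        = (H.comap (LinearMap.inl (ZMod p) _ _)
            ⊓ ortho (dotB p n) (H.map (LinearMap.snd (ZMod p) _ _))).prod
          (H.comap (LinearMap.inr (ZMod p) _ _)
            ⊓ ortho (dotB p n) (H.map (LinearMap.fst (ZMod p) _ _)))) := by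
  have h12 := exists_eq_prod_sup_ortho_sympB_iff_inf (dotB_isSymm p n) (dotB_nondegenerate p n) H
  exact ⟨h12, exists_eq_prod_sup_ortho_sympB_iff (dotB_isSymm p n) (dotB_nondegenerate p n) H,
    h12.trans (exists_eq_prod_inf_ortho_sympB_iff H)⟩
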